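/- Let Q be a finite poset such that min(di(x;Q), 1 − di(x;Q)) < 1/3 for every x ∈ Q (i.e. bi(Q) < 1/3). If x is maximal among those elements of Q with di(x;Q) > 2/3, then x is covered by at least two elements of Q; dually, if y is minimal among those elements of Q with di(y;Q) < 1/3, then y covers at least two elements of Q. -/

import Mathlib

/-!
If `x` lies in a lower set `I` and no element above `x` does, then `I \ {x}` is a lower set
missing `x`, and `I ↦ I \ {x}` is injective. So the lower sets containing `x` number at most
those containing some `y > x` plus those missing `x`. If `x` had at most one upper cover `a`,
every `y > x` would lie above `a` (or there would be none), giving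
`di x ≤ di a + (1 - di x)`. Maximality of `x` together with `bi(Q) < 1/3` forces
`di a < 1/3`, and `di x > 2/3` gives `1 - di x < 1/3`: a contradiction. The dual half is the
first one in `Qᵒᵈ`, whose lower sets are the complements of those of `Q`, so that `di`
turns into `1 - di`.
-/

/-- `di(x;Q)`: the fraction of order ideals (lower sets) of the poset `Q` that contain
the element `x`. -/
noncomputable def di (Q : Type*) [PartialOrder Q] (x : Q) : ℝ :=
  (Nat.card {I : Set Q // IsLowerSet I ∧ x ∈ I} : ℝ) /
    (Nat.card {I : Set Q // IsLowerSet I} : ℝ)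

open OrderDual

section

variable {Q : Type*} [PartialOrder Q]

lemma di_eq_ncard (x : Q) :
    di Q x = ({I : Set Q | IsLowerSet I ∧ x ∈ I}.ncard : ℝ) /
      {I : Set Q | IsLowerSet I}.ncard := by
  rw [di, ← Nat.card_coe_set_eq, ← Nat.card_coe_set_eq]
  rfl

def complDualEquiv : Set Qᵒᵈ ≃ Set Q where
  toFun I := (toDual ⁻¹' I)ᶜ
  invFun J := (ofDual ⁻¹' J)ᶜ
  left_inv I := by simp [Set.preimage_compl, Set.preimage_preimage]
  right_inv J := by simp [Set.preimage_compl, Set.preimage_preimage]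

variable [Finite Q]

lemma ncard_isLowerSet_pos : 0 < {I : Set Q | IsLowerSet I}.ncard :=
  (Set.ncard_pos (Set.toFinite _)).2 ⟨∅, isLowerSet_empty⟩

lemma ncard_isLowerSet_eq_add (x : Q) :
    {I : Set Q | IsLowerSet I}.ncard =
      {I : Set Q | IsLowerSet I ∧ x ∈ I}.ncard + {I : Set Q | IsLowerSet I ∧ x ∉ I}.ncard := by
  rw [← Set.ncard_union_eq ?_ (Set.toFinite _) (Set.toFinite _)]
  · congr 1
    ext I
    by_cases hx : x ∈ I <;> simp [hx]
  · exact Set.disjoint_left.2 fun I hI hI' => hI'.2 hI.2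

lemma one_sub_di_eq_ncard (x : Q) :
    1 - di Q x = ({I : Set Q | IsLowerSet I ∧ x ∉ I}.ncard : ℝ) /
      {I : Set Q | IsLowerSet I}.ncard := by
  have hpos : (0 : ℝ) < {I : Set Q | IsLowerSet I}.ncard := by
    exact_mod_cast ncard_isLowerSet_pos
  rw [di_eq_ncard, eq_div_iff hpos.ne', sub_mul, div_mul_cancel₀ _ hpos.ne',
    ncard_isLowerSet_eq_add x]
  push_cast
  ring

lemma ncard_isLowerSet_mem_le (x : Q) :
    {I : Set Q | IsLowerSet I ∧ x ∈ I}.ncard ≤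
      {I : Set Q | IsLowerSet I ∧ ∃ y, x < y ∧ y ∈ I}.ncard +
        {I : Set Q | IsLowerSet I ∧ x ∉ I}.ncard := by
  have hremove : {I : Set Q | IsLowerSet I ∧ x ∈ I ∧ ∀ y, x < y → y ∉ I}.ncard ≤
      {I : Set Q | IsLowerSet I ∧ x ∉ I}.ncard := by
    refine Set.ncard_le_ncard_of_injOn (· \ {x}) ?_ ?_ (Set.toFinite _)
    · rintro I ⟨hI, -, hxmax⟩
      refine ⟨fun u v hvu ⟨huI, hux⟩ => ⟨hI hvu huI, ?_⟩, fun hx => hx.2 rfl⟩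
      rintro rfl
      exact hxmax u (lt_of_le_of_ne hvu (Ne.symm hux)) huI
    · rintro I ⟨-, hxI, -⟩ J ⟨-, hxJ, -⟩ hIJ
      rw [← Set.insert_sdiff_self_of_mem hxI, ← Set.insert_sdiff_self_of_mem hxJ]
      exact congrArg (insert x) hIJ
  calc {I : Set Q | IsLowerSet I ∧ x ∈ I}.ncard
      ≤ ({I : Set Q | IsLowerSet I ∧ ∃ y, x < y ∧ y ∈ I} ∪
          {I : Set Q | IsLowerSet I ∧ x ∈ I ∧ ∀ y, x < y → y ∉ I}).ncard := by
        refine Set.ncard_le_ncard (fun I ⟨hI, hxI⟩ => ?_) (Set.toFinite _)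
        by_cases habove : ∃ y, x < y ∧ y ∈ I
        · exact Or.inl ⟨hI, habove⟩
        · push Not at habove
          exact Or.inr ⟨hI, hxI, habove⟩
    _ ≤ _ := (Set.ncard_union_le _ _).trans (Nat.add_le_add_left hremove _)

lemma di_le_add_one_sub_di (x : Q) :
    di Q x ≤ ({I : Set Q | IsLowerSet I ∧ ∃ y, x < y ∧ y ∈ I}.ncard : ℝ) /
      {I : Set Q | IsLowerSet I}.ncard + (1 - di Q x) := by
  rw [one_sub_di_eq_ncard, di_eq_ncard, ← add_div]
  gcongr
  exact_mod_cast ncard_isLowerSet_mem_le x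

lemma di_le_one_sub_di_of_isMax {x : Q} (hx : IsMax x) : di Q x ≤ 1 - di Q x := by
  have hempty : {I : Set Q | IsLowerSet I ∧ ∃ y, x < y ∧ y ∈ I} = ∅ :=
    Set.eq_empty_of_forall_notMem fun I ⟨_, y, hxy, _⟩ => hx.not_lt hxy
  simpa [hempty] using di_le_add_one_sub_di x

lemma di_le_di_add_one_sub_di {x a : Q} (hxa : x < a) (ha : ∀ y, x < y → a ≤ y) :
    di Q x ≤ di Q a + (1 - di Q x) := by
  have habove : {I : Set Q | IsLowerSet I ∧ ∃ y, x < y ∧ y ∈ I} =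
      {I : Set Q | IsLowerSet I ∧ a ∈ I} := by
    ext I
    exact ⟨fun ⟨hI, y, hxy, hyI⟩ => ⟨hI, hI (ha y hxy) hyI⟩,
      fun ⟨hI, haI⟩ => ⟨hI, a, hxa, haI⟩⟩
  simpa [habove, ← di_eq_ncard] using di_le_add_one_sub_di x

lemma di_toDual (y : Q) : di Qᵒᵈ (toDual y) = 1 - di Q y := by
  rw [di, one_sub_di_eq_ncard, ← Nat.card_coe_set_eq, ← Nat.card_coe_set_eq]
  congr 2 <;> exact Nat.card_congr (complDualEquiv.subtypeEquiv fun I => by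
    simp [complDualEquiv, isLowerSet_compl])

theorem exists_ne_covBy_of_maximal_two_thirds_lt_di
    (h : ∀ x : Q, min (di Q x) (1 - di Q x) < 1 / 3) {x : Q} (hx : 2 / 3 < di Q x)
    (hmax : ∀ z : Q, 2 / 3 < di Q z → x ≤ z → z = x) :
    ∃ a b : Q, a ≠ b ∧ x ⋖ a ∧ x ⋖ b := by
  by_contra! hcov
  by_cases hxmax : IsMax x
  · linarith [di_le_one_sub_di_of_isMax hxmax]
  obtain ⟨y, hxy⟩ := not_isMax_iff.1 hxmax
  obtain ⟨a, hxa, -⟩ := exists_covBy_le_of_lt hxy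
  have hcover_le : ∀ y, x < y → a ≤ y := fun y hxy => by
    obtain ⟨b, hxb, hby⟩ := exists_covBy_le_of_lt hxy
    obtain rfl : a = b := by_contra fun hab => hcov a b hab hxa hxb
    exact hby
  have hda : di Q a < 1 / 3 := (min_lt_iff.1 (h a)).resolve_right fun ha =>
    hxa.lt.ne' (hmax a (by linarith) hxa.le)
  linarith [di_le_di_add_one_sub_di hxa.lt hcover_le]

end

/-- Let `Q` be a finite poset with `min(di(x;Q), 1 − di(x;Q)) < 1/3` for
every `x ∈ Q` (i.e. `bi(Q) < 1/3`).  If `x` is maximal among elements with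
`di(x;Q) > 2/3`, then `x` is covered by at least two elements of `Q`; dually, if `y` is
minimal among elements with `di(y;Q) < 1/3`, then `y` covers at least two elements. -/
theorem stmt1 {Q : Type*} [PartialOrder Q] [Fintype Q]
    (h : ∀ x : Q, min (di Q x) (1 - di Q x) < 1 / 3) :
    (∀ x : Q, 2 / 3 < di Q x → (∀ z : Q, 2 / 3 < di Q z → x ≤ z → z = x) →
      ∃ a b : Q, a ≠ b ∧ x ⋖ a ∧ x ⋖ b) ∧
    (∀ y : Q, di Q y < 1 / 3 → (∀ z : Q, di Q z < 1 / 3 → z ≤ y → z = y) →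
      ∃ a b : Q, a ≠ b ∧ a ⋖ y ∧ b ⋖ y) := by
  refine ⟨fun x hx hmax => exists_ne_covBy_of_maximal_two_thirds_lt_di h hx hmax,
    fun y hy hmin => ?_⟩
  have hdual : ∀ x : Qᵒᵈ, min (di Qᵒᵈ x) (1 - di Qᵒᵈ x) < 1 / 3 := fun x => by
    rw [← toDual_ofDual x, di_toDual, sub_sub_cancel, min_comm]
    exact h _
  have hy' : 2 / 3 < di Qᵒᵈ (toDual y) := by
    rw [di_toDual]
    linarith
  have hmax : ∀ z : Qᵒᵈ, 2 / 3 < di Qᵒᵈ z → toDual y ≤ z → z = toDual y := fun z hz hyz => by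
    rw [← toDual_ofDual z, di_toDual] at hz
    exact congrArg toDual (hmin (ofDual z) (by linarith) hyz)
  obtain ⟨a, b, hab, ha, hb⟩ := exists_ne_covBy_of_maximal_two_thirds_lt_di hdual hy' hmax
  exact ⟨ofDual a, ofDual b, ofDual.injective.ne hab, ofDual_covBy_ofDual_iff.2 ha,
    ofDual_covBy_ofDual_iff.2 hb⟩
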